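/- arXiv:1406.0866 — 7 statements merged into one kernel-verified Lean document; each statement's English description precedes it below -/
import Mathlib

section
/- An unobservable attack exists (i.e., Range(H) ∩ A contains a nonzero vector) if and only if the submatrix H̄ of H obtained by deleting the rows indexed by the adversary sensor set S_A does not have full column rank. -/
open Matrix

/-- Full column rank of a matrix: its kernel (as a linear map on vectors) is trivial. -/
def FullColRank {α : Type*} [Fintype α] {n : ℕ} (M : Matrix α (Fin n) ℝ) : Prop :=
  ∀ y : Fin n → ℝ, M.mulVec y = 0 → y = 0

/-- An unobservable attack exists iff the submatrix `H̄` of `H` obtained by deleting the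
rows indexed by the adversary sensors `SA` does not have full column rank. -/
theorem exists_unobservable_iff_not_fullColRank
    {m n : ℕ} (H : Matrix (Fin m) (Fin n) ℝ)
    (hH : FullColRank H)  -- H has full column rank
    (SA : Finset (Fin m)) :
    (∃ a : Fin m → ℝ, a ≠ 0 ∧ (∃ y : Fin n → ℝ, H.mulVec y = a) ∧ ∀ i ∉ SA, a i = 0) ↔
      ¬ FullColRank (Matrix.of fun (i : {i : Fin m // i ∉ SA}) (j : Fin n) => H i.1 j) := by
  constructor
  · rintro ⟨a, ha, ⟨y, hy⟩, h0⟩ hfull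
    have hy0 : y ≠ 0 := by
      rintro rfl
      exact ha (hy ▸ (Matrix.mulVec_zero H).symm ▸ rfl)
    apply hy0
    apply hfull
    ext i
    show (fun j => H i.1 j) ⬝ᵥ y = 0
    have : H.mulVec y i.1 = 0 := by rw [hy]; exact h0 i.1 i.2
    exact this
  · intro hnot
    rw [FullColRank] at hnot
    push_neg at hnot
    obtain ⟨y, hy0, hy⟩ := hnot
    refine ⟨H.mulVec y, ?_, ⟨y, rfl⟩, ?_⟩
    · intro h
      exact hy (hH y h)
    · intro i hi
      have := congrFun hy0 ⟨i, hi⟩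
      exact this
end

section
/- Let U be an m×n matrix with Range(U) = Range(H), let Ū be U with the rows indexed by S_A deleted. If v is a nonzero vector in the null space of Ū, then a := Uv is a nonzero vector in Range(H) ∩ A, i.e., an unobservable attack vector. -/
open Matrix

/-- If `v ≠ 0` lies in the null space of `Ū` (`U` with the rows in `SA` deleted), then
`a := U v` is a nonzero vector of `Range(H)` supported on `SA`, i.e., an unobservable
attack vector. -/
theorem Uv_unobservable
    {m n : ℕ} (H U : Matrix (Fin m) (Fin n) ℝ)
    (hH : ∀ y : Fin n → ℝ, H.mulVec y = 0 → y = 0)  -- H has full column rank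
    (hU : LinearMap.range U.mulVecLin = LinearMap.range H.mulVecLin)
    (SA : Finset (Fin m)) (v : Fin n → ℝ) (hv : v ≠ 0)
    (hker : (Matrix.of fun (i : {i : Fin m // i ∉ SA}) (j : Fin n) => U i.1 j).mulVec v = 0) :
    U.mulVec v ≠ 0 ∧ (∃ y : Fin n → ℝ, H.mulVec y = U.mulVec v) ∧
      ∀ i ∉ SA, U.mulVec v i = 0 := by
  have hHinj : Function.Injective H.mulVecLin := by
    rw [← LinearMap.ker_eq_bot]
    ext y
    simp only [LinearMap.mem_ker, Submodule.mem_bot, mulVecLin_apply]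
    exact ⟨hH y, fun h => by simp [h]⟩
  have hHrange : Module.finrank ℝ ↥(LinearMap.range H.mulVecLin) = n := by
    rw [LinearMap.finrank_range_of_inj hHinj]
    simp
  have hUker : LinearMap.ker U.mulVecLin = ⊥ := by
    have h1 := LinearMap.finrank_range_add_finrank_ker U.mulVecLin
    rw [hU, hHrange] at h1
    simp only [Module.finrank_fin_fun] at h1
    have h2 : Module.finrank ℝ ↥(LinearMap.ker U.mulVecLin) = 0 := by omega
    exact Submodule.finrank_eq_zero.mp h2
  refine ⟨?_, ?_, ?_⟩
  · intro h
    apply hv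
    have : v ∈ LinearMap.ker U.mulVecLin := by simpa [mulVecLin_apply] using h
    simpa [hUker] using this
  · have : U.mulVec v ∈ LinearMap.range H.mulVecLin := by
      rw [← hU]; exact ⟨v, rfl⟩
    obtain ⟨y, hy⟩ := this
    exact ⟨y, hy⟩
  · intro i hi
    have := congrFun hker ⟨i, hi⟩
    simpa [mulVec, dotProduct] using this
end

section
/- For the orthogonal projection W = I − H(HᵀH)^{-1}Hᵀ, the diagonal entry W_{ii} equals zero if and only if the i-th standard basis vector e_i lies in Range(H); moreover W_{ii} = 0 holds if and only if deleting row i of H reduces its rank (renders the system unobservable). -/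
open Matrix

/-- `W i i = 0` iff the `i`-th standard basis vector lies in `Range(H)`, iff deleting
row `i` of `H` destroys full column rank. -/
theorem diag_zero_iff
    {m n : ℕ} (H : Matrix (Fin m) (Fin n) ℝ)
    (hH : ∀ y : Fin n → ℝ, H.mulVec y = 0 → y = 0)  -- full column rank
    (i : Fin m) :
    ((((1 : Matrix (Fin m) (Fin m) ℝ) - H * (Hᵀ * H)⁻¹ * Hᵀ) i i = 0) ↔
        (∃ y : Fin n → ℝ, H.mulVec y = Pi.single i 1)) ∧
      ((((1 : Matrix (Fin m) (Fin m) ℝ) - H * (Hᵀ * H)⁻¹ * Hᵀ) i i = 0) ↔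
        ¬ (∀ y : Fin n → ℝ,
            (Matrix.of fun (k : {k : Fin m // k ≠ i}) (j : Fin n) => H k.1 j).mulVec y = 0 →
              y = 0)) := by
  set W : Matrix (Fin m) (Fin m) ℝ := 1 - H * (Hᵀ * H)⁻¹ * Hᵀ with hW
  -- invertibility of HᵀH
  have hunit : IsUnit (Hᵀ * H) := by
    rw [← Matrix.mulVec_injective_iff_isUnit]
    intro a b hab
    have key : ∀ y : Fin n → ℝ, (Hᵀ * H).mulVec y = 0 → y = 0 := by
      intro y hy
      apply hH
      have h1 : (H.mulVec y) ⬝ᵥ (H.mulVec y) = 0 := by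
        have : y ⬝ᵥ ((Hᵀ * H).mulVec y) = 0 := by rw [hy]; simp
        rwa [← Matrix.mulVec_mulVec, Matrix.dotProduct_mulVec, Matrix.vecMul_transpose] at this
      exact dotProduct_self_eq_zero.mp h1
    exact sub_eq_zero.mp (key (a - b) (by rw [Matrix.mulVec_sub, hab, sub_self]))
  have hdet : IsUnit (Hᵀ * H).det := (Matrix.isUnit_iff_isUnit_det _).mp hunit
  -- W * H = 0
  have hWH : W * H = 0 := by
    rw [hW, Matrix.sub_mul, Matrix.one_mul, Matrix.mul_assoc, Matrix.mul_assoc,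
      Matrix.nonsing_inv_mul _ hdet, Matrix.mul_one, sub_self]
  -- W symmetric
  have hsym : Wᵀ = W := by
    rw [hW, Matrix.transpose_sub, Matrix.transpose_one, Matrix.transpose_mul,
      Matrix.transpose_mul, Matrix.transpose_nonsing_inv, Matrix.transpose_mul,
      Matrix.transpose_transpose, Matrix.mul_assoc]
  have hHW : Hᵀ * W = 0 := by
    rw [← hsym, ← Matrix.transpose_mul, hWH, Matrix.transpose_zero]
  -- W idempotent
  have hidem : W * W = W := by
    nth_rewrite 1 [hW]
    rw [Matrix.sub_mul, Matrix.one_mul, Matrix.mul_assoc, Matrix.mul_assoc, hHW]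
    simp
  -- W i i = 0 ↔ column i of W is 0
  have hcol : W i i = 0 ↔ W.mulVec (Pi.single i 1) = 0 := by
    constructor
    · intro h0
      have hsum : ∑ k, (W k i) ^ 2 = 0 := by
        have : (W * W) i i = W i i := by rw [hidem]
        rw [Matrix.mul_apply] at this
        rw [h0] at this
        calc ∑ k, (W k i) ^ 2 = ∑ k, W i k * W k i := by
              refine Finset.sum_congr rfl fun k _ => ?_
              rw [sq]
              congr 1
              have h := congrFun (congrFun hsym k) i
              simp only [Matrix.transpose_apply] at h
              exact h.symm
          _ = 0 := this
      have hall : ∀ k, W k i = 0 := by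
        intro k
        have := (Finset.sum_eq_zero_iff_of_nonneg (fun k _ => sq_nonneg (W k i))).mp hsum k
          (Finset.mem_univ k)
        exact pow_eq_zero_iff (two_ne_zero) |>.mp this
      funext k
      simp [Matrix.mulVec_single, hall k]
    · intro h0
      have := congrFun h0 i
      simpa [Matrix.mulVec_single] using this
  -- column i of W is 0 ↔ e_i ∈ Range H
  have hrange : W.mulVec (Pi.single i 1) = 0 ↔ ∃ y : Fin n → ℝ, H.mulVec y = Pi.single i 1 := by
    constructor
    · intro h0
      refine ⟨((Hᵀ * H)⁻¹ * Hᵀ).mulVec (Pi.single i 1), ?_⟩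
      have : (1 : Matrix (Fin m) (Fin m) ℝ).mulVec (Pi.single i 1)
          - (H * ((Hᵀ * H)⁻¹ * Hᵀ)).mulVec (Pi.single i 1) = 0 := by
        rw [← Matrix.sub_mulVec, ← Matrix.mul_assoc]
        exact h0
      rw [Matrix.one_mulVec, sub_eq_zero] at this
      rw [Matrix.mulVec_mulVec]
      exact this.symm
    · rintro ⟨y, hy⟩
      rw [← hy, Matrix.mulVec_mulVec, hWH, Matrix.zero_mulVec]
  -- Range ↔ deleting row destroys rank
  have hdel : (∃ y : Fin n → ℝ, H.mulVec y = Pi.single i 1) ↔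
      ¬ (∀ y : Fin n → ℝ,
          (Matrix.of fun (k : {k : Fin m // k ≠ i}) (j : Fin n) => H k.1 j).mulVec y = 0 →
            y = 0) := by
    constructor
    · rintro ⟨y, hy⟩ hfc
      have hker : (Matrix.of fun (k : {k : Fin m // k ≠ i}) (j : Fin n) => H k.1 j).mulVec y
          = 0 := by
        funext k
        have := congrFun hy k.1
        rw [Pi.single_eq_of_ne k.2] at this
        simpa [Matrix.mulVec, dotProduct] using this
      have hy0 : y = 0 := hfc y hker
      have : (H.mulVec y) i = (1 : ℝ) := by rw [hy]; simp
      rw [hy0] at this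
      simp at this
    · intro hnot
      push_neg at hnot
      obtain ⟨y, hy0, hyne⟩ := hnot
      set c : ℝ := (H.mulVec y) i with hc
      have hck : ∀ k, k ≠ i → (H.mulVec y) k = 0 := by
        intro k hk
        have := congrFun hy0 ⟨k, hk⟩
        simpa [Matrix.mulVec, dotProduct] using this
      have hcne : c ≠ 0 := by
        intro hc0
        apply hyne
        apply hH
        funext k
        by_cases hk : k = i
        · subst hk; simpa using hc0
        · simpa using hck k hk
      refine ⟨c⁻¹ • y, ?_⟩
      funext k
      rw [Matrix.mulVec_smul]
      by_cases hk : k = i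
      · subst hk
        simp [← hc, inv_mul_cancel₀ hcne]
      · simp [Pi.single_eq_of_ne hk, hck k hk]
  exact ⟨hcol.trans hrange, hcol.trans (hrange.trans hdel)⟩
end

section
/- Suppose the state variables in X_o are observable with respect to the sensor set S_o, C ⊆ S_o is a critical set with respect to (S_o, X_o), and removing C from all sensors makes the full system unobservable. Let H_o be the submatrix of H consisting of rows in S_o. Then the set A_o of vectors b ∈ Range(H_o) whose entries indexed by S_o \ C are zero is a one-dimensional subspace. -/
open Matrix

/-- The state variables in `X` are observable with respect to the sensor set `S`:
any state vector producing zero measurements on `S` vanishes on the coordinates in `X`. -/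
def ObsWrt {m n : ℕ} (H : Matrix (Fin m) (Fin n) ℝ) (S : Finset (Fin m))
    (X : Set (Fin n)) : Prop :=
  ∀ y : Fin n → ℝ, (∀ i ∈ S, H.mulVec y i = 0) → ∀ j ∈ X, y j = 0

/-- `C` is a critical set with respect to `(S, X)`. -/
def CriticalWrt {m n : ℕ} (H : Matrix (Fin m) (Fin n) ℝ) (S C : Finset (Fin m))
    (X : Set (Fin n)) : Prop :=
  C ⊆ S ∧ ¬ ObsWrt H (S \ C) X ∧ ∀ C' ⊂ C, ObsWrt H (S \ C') X

/-- The subspace of vectors vanishing on indices satisfying `P`. -/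
def zeroOn {ι : Type*} (P : ι → Prop) : Submodule ℝ (ι → ℝ) where
  carrier := {a | ∀ i, P i → a i = 0}
  add_mem' := by intro a b ha hb i hi; simp [ha i hi, hb i hi]
  zero_mem' := by intro i _; rfl
  smul_mem' := by intro c a ha i hi; simp [ha i hi]

/-- If `X_o` is observable w.r.t. `S_o`, `C ⊆ S_o` is critical w.r.t. `(S_o, X_o)`, and
removing `C` makes the full system unobservable, then the set `A_o` of vectors in
`Range(H_o)` vanishing on `S_o \ C` is a one-dimensional subspace. -/
theorem Ao_dim_one
    {m n : ℕ} (H : Matrix (Fin m) (Fin n) ℝ)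
    (hH : ∀ y : Fin n → ℝ, H.mulVec y = 0 → y = 0)  -- full column rank
    (So C : Finset (Fin m)) (Xo : Set (Fin n))
    (hXo : Xo = {j : Fin n | ∃ i ∈ So, H i j ≠ 0})
    (hobs : ObsWrt H So Xo)
    (hcrit : CriticalWrt H So C Xo)
    (hunobs : ∃ y : Fin n → ℝ, y ≠ 0 ∧ ∀ i ∉ C, H.mulVec y i = 0) :
    Module.finrank ℝ
        ((LinearMap.range
            (Matrix.of fun (i : {i : Fin m // i ∈ So}) (j : Fin n) => H i.1 j).mulVecLin) ⊓
          zeroOn (fun i : {i : Fin m // i ∈ So} => i.1 ∉ C) :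
          Submodule ℝ ({i : Fin m // i ∈ So} → ℝ)) = 1 := by

  classical
  set M : Matrix {i : Fin m // i ∈ So} (Fin n) ℝ :=
    Matrix.of fun (i : {i : Fin m // i ∈ So}) (j : Fin n) => H i.1 j with hM
  obtain ⟨y, hy0, hyC⟩ := hunobs
  set b : {i : Fin m // i ∈ So} → ℝ := M.mulVec y with hb
  have hMH : ∀ (z : Fin n → ℝ) (i : {i : Fin m // i ∈ So}),
      M.mulVec z i = H.mulVec z i.1 := fun _ _ => rfl
  have hbC : ∀ i : {i : Fin m // i ∈ So}, i.1 ∉ C → b i = 0 := fun i hi => hyC i.1 hi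
  have hbne : b ≠ 0 := by
    intro h
    apply hy0
    apply hH
    funext i
    by_cases hiC : i ∈ C
    · have hiS : i ∈ So := hcrit.1 hiC
      have h2 := congrFun h ⟨i, hiS⟩
      exact h2
    · exact hyC i hiC
  have hex : ∃ i, b i ≠ 0 := by
    by_contra h
    push_neg at h
    exact hbne (funext h)
  obtain ⟨i0, hi0⟩ := hex
  have hi0C : i0.1 ∈ C := by
    by_contra h
    exact hi0 (hbC i0 h)
  -- key: a vector in range vanishing off C and at i0 is zero
  have key : ∀ z : Fin n → ℝ, (∀ i : {i : Fin m // i ∈ So}, i.1 ∉ C → M.mulVec z i = 0) →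
      M.mulVec z i0 = 0 → M.mulVec z = 0 := by
    intro z hz hz0
    have hobs' := hcrit.2.2 (C.erase i0.1) (Finset.erase_ssubset hi0C)
    have hX : ∀ j ∈ Xo, z j = 0 := by
      apply hobs'
      intro i hi
      rw [Finset.mem_sdiff, Finset.mem_erase] at hi
      obtain ⟨hiS, hie⟩ := hi
      by_cases hiC : i ∈ C
      · have hii : i = i0.1 := by
          by_contra hne
          exact hie ⟨hne, hiC⟩
        have heq : (⟨i, hiS⟩ : {i : Fin m // i ∈ So}) = i0 := Subtype.ext hii
        calc H.mulVec z i = M.mulVec z ⟨i, hiS⟩ := rfl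
          _ = M.mulVec z i0 := by rw [heq]
          _ = 0 := hz0
      · exact hz ⟨i, hiS⟩ hiC
    funext i
    show M.mulVec z i = 0
    rw [Matrix.mulVec, dotProduct]
    apply Finset.sum_eq_zero
    intro j _
    by_cases hj : H i.1 j = 0
    · show H i.1 j * z j = 0
      rw [hj, zero_mul]
    · have hjX : j ∈ Xo := by
        rw [hXo]
        exact ⟨i.1, i.2, hj⟩
      show H i.1 j * z j = 0
      rw [hX j hjX, mul_zero]
  have hset : ((LinearMap.range M.mulVecLin) ⊓
        zeroOn (fun i : {i : Fin m // i ∈ So} => i.1 ∉ C) :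
        Submodule ℝ ({i : Fin m // i ∈ So} → ℝ)) = ℝ ∙ b := by
    apply le_antisymm
    · rintro a ha
      rw [Submodule.mem_inf] at ha
      obtain ⟨har, haz⟩ := ha
      obtain ⟨z, rfl⟩ := har
      have haC : ∀ i : {i : Fin m // i ∈ So}, i.1 ∉ C → M.mulVecLin z i = 0 :=
        fun i hi => haz i hi
      have hw : M.mulVec (b i0 • z - (M.mulVecLin z i0) • y) = 0 := by
        apply key
        · intro i hi
          rw [Matrix.mulVec_sub, Matrix.mulVec_smul, Matrix.mulVec_smul]
          simp only [Pi.sub_apply, Pi.smul_apply, smul_eq_mul]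
          rw [show (M.mulVec z) i = M.mulVecLin z i from rfl, haC i hi]
          have h5 := hbC i hi
          rw [hb] at h5
          rw [h5]
          ring
        · rw [Matrix.mulVec_sub, Matrix.mulVec_smul, Matrix.mulVec_smul]
          simp only [Pi.sub_apply, Pi.smul_apply, smul_eq_mul]
          rw [show (M.mulVec z) i0 = M.mulVecLin z i0 from rfl]
          rw [show (M.mulVec y) i0 = b i0 from rfl]
          ring
      have h1 : ∀ i, b i0 * M.mulVecLin z i = M.mulVecLin z i0 * b i := by
        intro i
        have h2 := congrFun hw i
        rw [Matrix.mulVec_sub, Matrix.mulVec_smul, Matrix.mulVec_smul] at h2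
        simp only [Pi.sub_apply, Pi.smul_apply, smul_eq_mul, Pi.zero_apply] at h2
        have h3 : (M.mulVec z) i = M.mulVecLin z i := rfl
        have h4 : (M.mulVec y) i = b i := rfl
        rw [h3, h4] at h2
        linarith
      rw [Submodule.mem_span_singleton]
      refine ⟨M.mulVecLin z i0 / b i0, ?_⟩
      funext i
      simp only [Pi.smul_apply, smul_eq_mul]
      rw [div_mul_eq_mul_div, div_eq_iff hi0]
      linarith [h1 i]
    · rw [Submodule.span_singleton_le_iff_mem, Submodule.mem_inf]
      exact ⟨⟨y, rfl⟩, hbC⟩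
  rw [hset]
  exact finrank_span_singleton hbne
end

section
/- Under the hypotheses of the partial-measurement theorem (X_o observable w.r.t. S_o, C critical w.r.t. (S_o, X_o), removing C makes H rank deficient), every nonzero vector a_o in the one-dimensional space A_o is a scalar multiple of H_o y, where y is any nonzero vector in the null space of H̄ (H with rows in C deleted); and the full attack vector supported on C obtained by extending a_o by zeros equals a scalar multiple of Hy, hence is an unobservable attack. -/
open Matrix

/-!
Write `b = H_o p`. Since `H` has full column rank, `H y` is nonzero, and it vanishes off `C`, so
`(H y)_c ≠ 0` for some `c ∈ C`. Choosing `α` with `(H (p - α y))_c = 0`, the vector `H (p - α y)`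
vanishes on `S_o \ (C \ {c})`. By minimality of the critical set `C` these sensors still observe
`X_o`, so `p - α y` vanishes on `X_o`; as the rows of `H_o` are supported on `X_o`, this gives
`b = α H_o y`, and the rest is bookkeeping.
-/

section Observability

variable {m n : ℕ} {H : Matrix (Fin m) (Fin n) ℝ}

theorem ObsWrt.mulVec_eq_zero_of_support_subset {S T : Finset (Fin m)} {X : Set (Fin n)}
    (hobs : ObsWrt H S X) (hT : ∀ i ∈ T, ∀ j, H i j ≠ 0 → j ∈ X) {z : Fin n → ℝ}
    (hz : ∀ i ∈ S, (H *ᵥ z) i = 0) : ∀ i ∈ T, (H *ᵥ z) i = 0 := by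
  intro i hi
  show ∑ j, H i j * z j = 0
  refine Finset.sum_eq_zero fun j _ => ?_
  by_cases hij : H i j = 0
  · simp [hij]
  · simp [hobs z hz j (hT i hi j hij)]

theorem CriticalWrt.mulVec_eq_mul_mulVec {S C : Finset (Fin m)} {X : Set (Fin n)}
    (hcrit : CriticalWrt H S C X) (hX : ∀ i ∈ S, ∀ j, H i j ≠ 0 → j ∈ X)
    {y p : Fin n → ℝ} (hy : ∀ i ∉ C, (H *ᵥ y) i = 0) {c : Fin m} (hc : c ∈ C)
    (hyc : (H *ᵥ y) c ≠ 0) (hp : ∀ i ∈ S, i ∉ C → (H *ᵥ p) i = 0) :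
    ∀ i ∈ S, (H *ᵥ p) i = (H *ᵥ p) c / (H *ᵥ y) c * (H *ᵥ y) i := by
  set α := (H *ᵥ p) c / (H *ᵥ y) c
  have hz : ∀ i, (H *ᵥ (p - α • y)) i = (H *ᵥ p) i - α * (H *ᵥ y) i := fun i => by
    rw [mulVec_sub, mulVec_smul, Pi.sub_apply, Pi.smul_apply, smul_eq_mul]
  have hobs : ObsWrt H (S \ (C \ {c})) X :=
    hcrit.2.2 _ <|
      Finset.sdiff_ssubset (Finset.singleton_subset_iff.mpr hc) (Finset.singleton_nonempty c)
  have hzero : ∀ i ∈ S \ (C \ {c}), (H *ᵥ (p - α • y)) i = 0 := by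
    intro i hi
    simp only [Finset.mem_sdiff, Finset.mem_singleton, not_and, not_not] at hi
    rw [hz]
    by_cases hiC : i ∈ C
    · rw [hi.2 hiC]
      exact sub_eq_zero.mpr (div_mul_cancel₀ _ hyc).symm
    · simp [hp i hi.1 hiC, hy i hiC]
  intro i hi
  have := hobs.mulVec_eq_zero_of_support_subset hX hzero i hi
  rwa [hz, sub_eq_zero] at this

end Observability

theorem framing_partial_unobservable_general
    {m n : ℕ} (H : Matrix (Fin m) (Fin n) ℝ)
    (hH : ∀ y' : Fin n → ℝ, H.mulVec y' = 0 → y' = 0)  -- full column rank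
    (So C : Finset (Fin m)) (Xo : Set (Fin n))
    (hXo : Xo = {j : Fin n | ∃ i ∈ So, H i j ≠ 0})
    (hcrit : CriticalWrt H So C Xo)
    (y : Fin n → ℝ) (hy : y ≠ 0) (hyker : ∀ i ∉ C, H.mulVec y i = 0)
    (b : {i : Fin m // i ∈ So} → ℝ) (hb : b ≠ 0)
    (hbrange : ∃ p : Fin n → ℝ,
      (Matrix.of fun (i : {i : Fin m // i ∈ So}) (j : Fin n) => H i.1 j).mulVec p = b)
    (hbsupp : ∀ i : {i : Fin m // i ∈ So}, i.1 ∉ C → b i = 0) :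
    ∃ α : ℝ, α ≠ 0 ∧
      b = α • (Matrix.of fun (i : {i : Fin m // i ∈ So}) (j : Fin n) => H i.1 j).mulVec y ∧
      (fun i : Fin m => if h : i ∈ So then b ⟨i, h⟩ else 0) = α • H.mulVec y ∧
      (fun i : Fin m => if h : i ∈ So then b ⟨i, h⟩ else 0) ≠ 0 ∧
      (∃ x : Fin n → ℝ,
        H.mulVec x = fun i : Fin m => if h : i ∈ So then b ⟨i, h⟩ else 0) ∧
      (∀ i ∉ C, (if h : i ∈ So then b ⟨i, h⟩ else 0) = 0) := by
  have hHy : H *ᵥ y ≠ 0 := fun h => hy (hH y h)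
  obtain ⟨c, hc, hyc⟩ : ∃ c ∈ C, (H *ᵥ y) c ≠ 0 := by
    by_contra! h
    exact hHy (funext fun i => if hi : i ∈ C then h i hi else hyker i hi)
  obtain ⟨p, hp⟩ := hbrange
  have hbp (i : {i : Fin m // i ∈ So}) : b i = (H *ᵥ p) i := (congrFun hp i).symm
  set α := (H *ᵥ p) c / (H *ᵥ y) c
  have hpy : ∀ i ∈ So, (H *ᵥ p) i = α * (H *ᵥ y) i :=
    hcrit.mulVec_eq_mul_mulVec (fun i hi j hij => hXo ▸ ⟨i, hi, hij⟩) hyker hc hyc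
      fun i hi hiC => (hbp ⟨i, hi⟩).symm.trans (hbsupp ⟨i, hi⟩ hiC)
  have hb_eq : b = α • (Matrix.of fun (i : {i : Fin m // i ∈ So}) (j : Fin n) => H i.1 j) *ᵥ y :=
    funext fun i => (hbp i).trans (hpy i.1 i.2)
  have hα : α ≠ 0 := by
    intro hα0
    rw [hα0, zero_smul] at hb_eq
    exact hb hb_eq
  set e := fun i : Fin m => if h : i ∈ So then b ⟨i, h⟩ else 0
  have he : e = α • H *ᵥ y := by
    funext i
    by_cases h : i ∈ So
    · exact (dif_pos h).trans ((hbp ⟨i, h⟩).trans (hpy i h))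
    · simp [e, h, hyker i fun hiC => h (hcrit.1 hiC)]
  refine ⟨α, hα, hb_eq, he, he ▸ smul_ne_zero hα hHy, ⟨α • y, he ▸ mulVec_smul H α y⟩,
    fun i hi => (congrFun he i).trans ?_⟩
  simp [hyker i hi]

/-- Under the partial-measurement hypotheses, every nonzero `b ∈ A_o` is a scalar
multiple of `H_o y` for any nonzero `y ∈ Null(H̄)`, and its extension by zeros equals
the same scalar multiple of `H y`; hence it yields an unobservable attack supported on `C`. -/
theorem framing_partial_unobservable
    {m n : ℕ} (H : Matrix (Fin m) (Fin n) ℝ)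
    (hH : ∀ y' : Fin n → ℝ, H.mulVec y' = 0 → y' = 0)  -- full column rank
    (So C : Finset (Fin m)) (Xo : Set (Fin n))
    (hXo : Xo = {j : Fin n | ∃ i ∈ So, H i j ≠ 0})
    (hobs : ObsWrt H So Xo)
    (hcrit : CriticalWrt H So C Xo)
    (y : Fin n → ℝ) (hy : y ≠ 0) (hyker : ∀ i ∉ C, H.mulVec y i = 0)
    (b : {i : Fin m // i ∈ So} → ℝ) (hb : b ≠ 0)
    (hbrange : ∃ p : Fin n → ℝ,
      (Matrix.of fun (i : {i : Fin m // i ∈ So}) (j : Fin n) => H i.1 j).mulVec p = b)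
    (hbsupp : ∀ i : {i : Fin m // i ∈ So}, i.1 ∉ C → b i = 0) :
    ∃ α : ℝ, α ≠ 0 ∧
      b = α • (Matrix.of fun (i : {i : Fin m // i ∈ So}) (j : Fin n) => H i.1 j).mulVec y ∧
      (fun i : Fin m => if h : i ∈ So then b ⟨i, h⟩ else 0) = α • H.mulVec y ∧
      (fun i : Fin m => if h : i ∈ So then b ⟨i, h⟩ else 0) ≠ 0 ∧
      (∃ x : Fin n → ℝ,
        H.mulVec x = fun i : Fin m => if h : i ∈ So then b ⟨i, h⟩ else 0) ∧
      (∀ i ∉ C, (if h : i ∈ So then b ⟨i, h⟩ else 0) = 0) :=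
  framing_partial_unobservable_general H hH So C Xo hXo hcrit y hy hyker b hb hbrange hbsupp
end

section
/- If the null space of H̄ (H with rows in the set C deleted) has dimension one, then C contains exactly one critical set, where a critical set is a minimal subset of sensors whose removal makes H rank deficient. -/
open Matrix

/-- `H` keeps full column rank after the rows in `D` are deleted. -/
def FullColRankAfterRemove {m n : ℕ} (H : Matrix (Fin m) (Fin n) ℝ)
    (D : Finset (Fin m)) : Prop :=
  ∀ y : Fin n → ℝ, (∀ i ∉ D, H.mulVec y i = 0) → y = 0

/-- `D` is a critical set: removing `D` makes `H` rank deficient, but removing any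
proper subset of `D` does not. -/
def CriticalSet {m n : ℕ} (H : Matrix (Fin m) (Fin n) ℝ) (D : Finset (Fin m)) : Prop :=
  ¬ FullColRankAfterRemove H D ∧ ∀ D' ⊂ D, FullColRankAfterRemove H D'

/-- If the null space of `H` with the rows in `C` deleted has dimension one, then `C`
contains exactly one critical set. -/
theorem unique_critical_subset
    {m n : ℕ} (H : Matrix (Fin m) (Fin n) ℝ)
    (hH : ∀ y : Fin n → ℝ, H.mulVec y = 0 → y = 0)  -- full column rank
    (C : Finset (Fin m))
    (hdim : Module.finrank ℝ
        (LinearMap.ker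
          (Matrix.of fun (i : {i : Fin m // i ∉ C}) (j : Fin n) => H i.1 j).mulVecLin) = 1) :
    ∃! D : Finset (Fin m), D ⊆ C ∧ CriticalSet H D := by
  set A : Matrix {i : Fin m // i ∉ C} (Fin n) ℝ :=
    Matrix.of fun i j => H i.1 j with hA
  have hker : ∀ y : Fin n → ℝ,
      y ∈ LinearMap.ker A.mulVecLin ↔ ∀ i ∉ C, H.mulVec y i = 0 := by
    intro y
    constructor
    · intro h i hi
      have := congrFun (LinearMap.mem_ker.mp h) ⟨i, hi⟩
      simpa [hA, Matrix.mulVecLin_apply, Matrix.mulVec, dotProduct] using this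
    · intro h
      apply LinearMap.mem_ker.mpr
      funext i
      simpa [hA, Matrix.mulVecLin_apply, Matrix.mulVec, dotProduct] using h i.1 i.2
  obtain ⟨v0, hv0ne, hv0span⟩ := finrank_eq_one_iff'.mp hdim
  set v : Fin n → ℝ := (v0 : Fin n → ℝ) with hv
  have hvne : v ≠ 0 := by
    intro h
    exact hv0ne (Subtype.ext h)
  have hvker : ∀ i ∉ C, H.mulVec v i = 0 := (hker v).mp v0.2
  -- any y in the kernel is a multiple of v
  have hmul : ∀ y : Fin n → ℝ, (∀ i ∉ C, H.mulVec y i = 0) → ∃ c : ℝ, y = c • v := by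
    intro y hy
    obtain ⟨c, hc⟩ := hv0span ⟨y, (hker y).mpr hy⟩
    exact ⟨c, by simpa [hv] using congrArg Subtype.val hc.symm⟩
  set D : Finset (Fin m) := C.filter (fun i => H.mulVec v i ≠ 0) with hD
  have hDC : D ⊆ C := Finset.filter_subset _ _
  have hDnf : ¬ FullColRankAfterRemove H D := by
    intro hfull
    apply hvne
    apply hfull
    intro i hi
    by_cases hiC : i ∈ C
    · by_contra hne
      exact hi (Finset.mem_filter.mpr ⟨hiC, hne⟩)
    · exact hvker i hiC
  -- key: for D' ⊆ C, ¬Full(D') ↔ D ⊆ D'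
  have hkey : ∀ D' : Finset (Fin m), D' ⊆ C → ¬ FullColRankAfterRemove H D' → D ⊆ D' := by
    intro D' hD'C hnf
    by_contra hnsub
    apply hnf
    -- show Full(D') by contradiction: any kernel vector of D' is c • v, and would vanish on D
    intro y hy
    by_contra hyne
    obtain ⟨c, hc⟩ := hmul y (fun i hi => hy i (fun hmem => hi (hD'C hmem)))
    have hcne : c ≠ 0 := by
      intro h
      apply hyne
      simp [hc, h]
    obtain ⟨i, hiD, hiD'⟩ := Finset.not_subset.mp hnsub
    obtain ⟨hiC, hiv⟩ := Finset.mem_filter.mp hiD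
    have := hy i hiD'
    rw [hc, Matrix.mulVec_smul] at this
    exact hiv (by simpa [hcne] using this)
  refine ⟨D, ⟨hDC, hDnf, ?_⟩, ?_⟩
  · intro D' hD'
    by_contra hnf
    exact hD'.not_subset (hkey D' (hD'.subset.trans hDC) hnf)
  · rintro D'' ⟨hD''C, hD''nf, hD''min⟩
    have hsub : D ⊆ D'' := hkey D'' hD''C hD''nf
    rcases eq_or_lt_of_le hsub with h | h
    · exact h.symm
    · exact absurd (hD''min D h) hDnf
end

section
/- Let S_A ∪ S_F contain exactly one critical set and let H₂ be H with the rows in S_A ∪ S_F deleted, so that H₂ has rank n−1. Let H₁ be H with the rows in S_F zeroed out, and A the set of vectors supported on S_A. Then the subspace Range(H₁) ∩ A has dimension at most one and equals {H₁Δx : Δx ∈ Null(H₂)} whenever H₁Δx ∈ A for Δx ∈ Null(H₂). -/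
open Matrix

/-- If `H₂` (rows in `S_A ∪ S_F` deleted) has a one-dimensional null space, then
`Range(H₁) ∩ A` has dimension at most one, and it equals `H₁(Null(H₂))` whenever
`H₁ Δx` is supported on `S_A` for every `Δx ∈ Null(H₂)`. -/
theorem framing_attack_space
    {m n : ℕ} (H : Matrix (Fin m) (Fin n) ℝ)
    (hH : ∀ y : Fin n → ℝ, H.mulVec y = 0 → y = 0)  -- full column rank
    (SA SF : Finset (Fin m)) (hdisj : Disjoint SA SF)
    (H₁ : Matrix (Fin m) (Fin n) ℝ)
    (hH₁ : H₁ = Matrix.of fun i j => if i ∈ SF then 0 else H i j)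
    (H₂ : Matrix {i : Fin m // i ∉ SA ∪ SF} (Fin n) ℝ)
    (hH₂ : H₂ = Matrix.of fun (i : {i : Fin m // i ∉ SA ∪ SF}) (j : Fin n) => H i.1 j)
    (hdim : Module.finrank ℝ (LinearMap.ker H₂.mulVecLin) = 1) :
    Module.finrank ℝ
        ((LinearMap.range H₁.mulVecLin) ⊓ zeroOn (fun i : Fin m => i ∉ SA) :
          Submodule ℝ (Fin m → ℝ)) ≤ 1 ∧
    ((∀ Δx ∈ LinearMap.ker H₂.mulVecLin,
        H₁.mulVec Δx ∈ zeroOn (fun i : Fin m => i ∉ SA)) →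
      (LinearMap.range H₁.mulVecLin) ⊓ zeroOn (fun i : Fin m => i ∉ SA) =
        Submodule.map H₁.mulVecLin (LinearMap.ker H₂.mulVecLin)) := by
  -- if i ∉ SF then row i of H₁ equals row i of H
  have hrow : ∀ (x : Fin n → ℝ) (i : Fin m), i ∉ SF → H₁.mulVec x i = H.mulVec x i := by
    intro x i hi
    simp [hH₁, Matrix.mulVec, dotProduct, hi]
  have hrowF : ∀ (x : Fin n → ℝ) (i : Fin m), i ∈ SF → H₁.mulVec x i = 0 := by
    intro x i hi
    simp [hH₁, Matrix.mulVec, dotProduct, hi]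
  have heq : (LinearMap.range H₁.mulVecLin) ⊓ zeroOn (fun i : Fin m => i ∉ SA) =
      Submodule.map H₁.mulVecLin (LinearMap.ker H₂.mulVecLin) := by
    apply le_antisymm
    · rintro y ⟨⟨x, rfl⟩, hy⟩
      refine ⟨x, ?_, rfl⟩
      simp only [SetLike.mem_coe, LinearMap.mem_ker, Matrix.mulVecLin_apply]
      funext i
      obtain ⟨i, hiu⟩ := i
      have hiA : i ∉ SA := fun h => hiu (Finset.mem_union_left _ h)
      have hiF : i ∉ SF := fun h => hiu (Finset.mem_union_right _ h)
      have h0 : H₁.mulVec x i = 0 := hy i hiA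
      have : H.mulVec x i = 0 := by rw [← hrow x i hiF]; exact h0
      simpa [hH₂, Matrix.mulVec, dotProduct] using this
    · rintro y ⟨x, hx, rfl⟩
      have hx' : H₂.mulVec x = 0 := hx
      refine ⟨⟨x, rfl⟩, ?_⟩
      intro i hiA
      by_cases hiF : i ∈ SF
      · rw [Matrix.mulVecLin_apply]; exact hrowF x i hiF
      · have hiu : i ∉ SA ∪ SF := by
          simp [Finset.mem_union, hiA, hiF]
        have := congrFun hx' ⟨i, hiu⟩
        have h2 : H.mulVec x i = 0 := by
          simpa [hH₂, Matrix.mulVec, dotProduct] using this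
        rw [Matrix.mulVecLin_apply, hrow x i hiF]; exact h2
  refine ⟨?_, fun _ => heq⟩
  rw [heq]
  calc Module.finrank ℝ (Submodule.map H₁.mulVecLin (LinearMap.ker H₂.mulVecLin))
      ≤ Module.finrank ℝ (LinearMap.ker H₂.mulVecLin) := Submodule.finrank_map_le _ _
    _ = 1 := hdim
end
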